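/- arXiv:2305.12832 — 2 statements merged into one kernel-verified Lean document; each statement's English description precedes it below -/
import Mathlib

section
/- Let (F_ε)_ε be a net of functions in C¹([0,T] × ℝ, ℝ), uniformly bounded by c ε^{−N} and with ‖∂_x F_ε‖_{L^∞} ≤ c |log ε| for all ε ∈ (0,1]. Let x_ε solve x_ε'(t) = F_ε(t, x_ε(t)), x_ε(0) = x_{0,ε}, where (x_{0,ε})_ε is moderate, i.e. |x_{0,ε}| ≤ c' ε^{−N'}. Then the net of solutions (x_ε)_ε is moderate: there exist C, M such that sup_{t∈[0,T]} |x_ε(t)| ≤ C ε^{−M} for all ε ∈ (0,1]. -/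
open Set

/-- if the net of vector fields `(F_ε)` is uniformly bounded by `c ε^{-N}`
with logarithmically moderate spatial derivative `|∂_x F_ε| ≤ c |log ε|`, and the net of
initial data is moderate, then the net of solutions of `x' = F_ε(t,x)` is moderate. -/
theorem moderate_net_of_ode_solutions
    (T : ℝ) (hT : 0 < T) (c c' : ℝ) (hc : 0 < c) (hc' : 0 < c') (N N' : ℕ)
    (F F' : ℝ → ℝ → ℝ → ℝ)
    (hFc : ∀ ε ∈ Ioc (0:ℝ) 1, Continuous fun p : ℝ × ℝ => F ε p.1 p.2)
    (hFbound : ∀ ε ∈ Ioc (0:ℝ) 1, ∀ t x, |F ε t x| ≤ c * ε ^ (-(N:ℤ)))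
    (hF' : ∀ ε ∈ Ioc (0:ℝ) 1, ∀ t x, HasDerivAt (F ε t) (F' ε t x) x)
    (hF'log : ∀ ε ∈ Ioc (0:ℝ) 1, ∀ t x, |F' ε t x| ≤ c * |Real.log ε|)
    (x : ℝ → ℝ → ℝ) (x₀ : ℝ → ℝ)
    (hinit : ∀ ε ∈ Ioc (0:ℝ) 1, x ε 0 = x₀ ε)
    (hx₀ : ∀ ε ∈ Ioc (0:ℝ) 1, |x₀ ε| ≤ c' * ε ^ (-(N':ℤ)))
    (hsol : ∀ ε ∈ Ioc (0:ℝ) 1, ∀ t ∈ Icc (0:ℝ) T, HasDerivAt (x ε) (F ε t (x ε t)) t) :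
    ∃ C : ℝ, ∃ M : ℕ, 0 < C ∧
      ∀ ε ∈ Ioc (0:ℝ) 1, ∀ t ∈ Icc (0:ℝ) T, |x ε t| ≤ C * ε ^ (-(M:ℤ)) := by
  refine ⟨c' + c * T, max N N', by positivity, ?_⟩
  intro ε hε t ht
  have hε0 : (0:ℝ) < ε := hε.1
  have hε1 : ε ≤ 1 := hε.2
  -- ε^{-N} ≤ ε^{-max N N'} and similarly for N'
  have hmono : ∀ k : ℕ, k ≤ max N N' → ε ^ (-(k:ℤ)) ≤ ε ^ (-((max N N' : ℕ):ℤ)) := by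
    intro k hk
    exact zpow_le_zpow_right_of_le_one₀ hε0 hε1 (by omega)
  have hMpos : (0:ℝ) < ε ^ (-((max N N' : ℕ):ℤ)) := by positivity
  -- mean value inequality on [0, t]
  have key : |x ε t - x ε 0| ≤ c * ε ^ (-(N:ℤ)) * |t - 0| := by
    have hsub : Icc (0:ℝ) t ⊆ Icc 0 T := Icc_subset_Icc le_rfl ht.2
    have := Convex.norm_image_sub_le_of_norm_hasDerivWithin_le
      (f := x ε) (f' := fun s => F ε s (x ε s)) (C := c * ε ^ (-(N:ℤ)))
      (fun s hs => ((hsol ε hε s (hsub hs)).hasDerivWithinAt))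
      (fun s _ => by simpa [Real.norm_eq_abs] using hFbound ε hε s (x ε s))
      (convex_Icc 0 t) ⟨le_rfl, ht.1⟩ ⟨ht.1, le_rfl⟩
    simpa [Real.norm_eq_abs] using this
  have h1 : |x ε t| ≤ |x ε 0| + c * ε ^ (-(N:ℤ)) * T := by
    have habs : |x ε t| - |x ε 0| ≤ |x ε t - x ε 0| := abs_sub_abs_le_abs_sub _ _
    have ht' : |t - 0| ≤ T := by rw [sub_zero, abs_of_nonneg ht.1]; exact ht.2
    nlinarith [mul_le_mul_of_nonneg_left ht' (by positivity : (0:ℝ) ≤ c * ε ^ (-(N:ℤ)))]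
  have h2 : |x ε 0| ≤ c' * ε ^ (-((max N N' : ℕ):ℤ)) := by
    rw [hinit ε hε]
    exact (hx₀ ε hε).trans (by
      have := hmono N' (le_max_right _ _)
      nlinarith)
  have h3 : c * ε ^ (-(N:ℤ)) * T ≤ c * T * ε ^ (-((max N N' : ℕ):ℤ)) := by
    have := hmono N (le_max_left _ _)
    nlinarith [mul_le_mul_of_nonneg_left this (by positivity : (0:ℝ) ≤ c * T)]
  calc |x ε t| ≤ |x ε 0| + c * ε ^ (-(N:ℤ)) * T := h1
    _ ≤ c' * ε ^ (-((max N N' : ℕ):ℤ)) + c * T * ε ^ (-((max N N' : ℕ):ℤ)) := add_le_add h2 h3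
    _ = (c' + c * T) * ε ^ (-((max N N' : ℕ):ℤ)) := by ring
end

section
/- Let (F_ε)_ε be as above (C¹, moderate bounds, logarithmically moderate ∂_x F_ε) and let x_ε, y_ε solve the same ODE x' = F_ε(t,x) with initial data x_{0,ε} and x_{0,ε} + n_ε respectively, where (n_ε)_ε is negligible (for every q, |n_ε| ≤ c_q ε^q). Then (x_ε − y_ε)_ε is negligible: for every q ∈ ℕ there is C_q with sup_{t∈[0,T]} |x_ε(t) − y_ε(t)| ≤ C_q ε^q. -/
/-!
A spatial derivative bounded by `c |log ε|` makes `F_ε(t, ·)` Lipschitz with that constant, so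
Grönwall's inequality gives `|x_ε(t) - y_ε(t)| ≤ |n_ε| e^{c |log ε| t} ≤ |n_ε| ε^{-cT}`. The loss
`ε^{-cT}` is only moderate, so it is absorbed by asking for the bound `|n_ε| ≤ c' ε^{q + ⌈cT⌉}`.
-/

open Set Real

theorem abs_sub_le_of_trajectories_of_abs_deriv_le {v v' : ℝ → ℝ → ℝ} {K a b : ℝ} {f g : ℝ → ℝ}
    (hv : ∀ s u, HasDerivAt (v s) (v' s u) u) (hv' : ∀ s u, |v' s u| ≤ K)
    (hf : ∀ t ∈ Icc a b, HasDerivAt f (v t (f t)) t)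
    (hg : ∀ t ∈ Icc a b, HasDerivAt g (v t (g t)) t) :
    ∀ t ∈ Icc a b, |f t - g t| ≤ |f a - g a| * exp (K * (t - a)) := by
  have hK : 0 ≤ K := (abs_nonneg _).trans (hv' 0 0)
  have hlip : ∀ s, LipschitzWith K.toNNReal (v s) := fun s =>
    lipschitzWith_of_nnnorm_deriv_le (fun u => (hv s u).differentiableAt) fun u => by
      rw [(hv s u).deriv, ← NNReal.coe_le_coe, coe_nnnorm, Real.coe_toNNReal K hK]
      exact hv' s u
  have hgron := dist_le_of_trajectories_ODE hlip
    (fun t ht => (hf t ht).continuousAt.continuousWithinAt)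
    (fun t ht => (hf t (Ico_subset_Icc_self ht)).hasDerivWithinAt)
    (fun t ht => (hg t ht).continuousAt.continuousWithinAt)
    (fun t ht => (hg t (Ico_subset_Icc_self ht)).hasDerivWithinAt) le_rfl
  simpa only [Real.dist_eq, Real.coe_toNNReal K hK] using hgron

theorem exp_mul_abs_log_mul_le_rpow_neg {c ε t T : ℝ} (hc : 0 ≤ c) (hε₀ : 0 < ε) (hε₁ : ε ≤ 1)
    (ht : t ≤ T) : exp (c * |log ε| * t) ≤ ε ^ (-(c * T)) := by
  have hlog : |log ε| = -log ε := abs_of_nonpos (log_nonpos hε₀.le hε₁)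
  rw [rpow_def_of_pos hε₀, exp_le_exp]
  calc c * |log ε| * t ≤ c * |log ε| * T := by gcongr
    _ = log ε * -(c * T) := by rw [hlog]; ring

theorem pow_add_ceil_mul_rpow_neg_le {ε : ℝ} (hε₀ : 0 < ε) (hε₁ : ε ≤ 1) (q : ℕ) (a : ℝ) :
    ε ^ (q + ⌈a⌉₊) * ε ^ (-a) ≤ ε ^ q := by
  rw [← rpow_natCast, ← rpow_add hε₀, ← rpow_natCast]
  apply rpow_le_rpow_of_exponent_ge hε₀ hε₁
  push_cast
  linarith [Nat.le_ceil a]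

theorem negligible_perturbation_of_ode_solutions_general
    (T : ℝ) (c : ℝ) (hc : 0 < c)
    (F F' : ℝ → ℝ → ℝ → ℝ)
    (hF' : ∀ ε ∈ Ioc (0:ℝ) 1, ∀ t x, HasDerivAt (F ε t) (F' ε t x) x)
    (hF'log : ∀ ε ∈ Ioc (0:ℝ) 1, ∀ t x, |F' ε t x| ≤ c * |Real.log ε|)
    (x y : ℝ → ℝ → ℝ) (x₀ nn : ℝ → ℝ)
    (hinitx : ∀ ε ∈ Ioc (0:ℝ) 1, x ε 0 = x₀ ε)
    (hinity : ∀ ε ∈ Ioc (0:ℝ) 1, y ε 0 = x₀ ε + nn ε)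
    (hneg : ∀ q : ℕ, ∃ cq > 0, ∀ ε ∈ Ioc (0:ℝ) 1, |nn ε| ≤ cq * ε ^ q)
    (hsolx : ∀ ε ∈ Ioc (0:ℝ) 1, ∀ t ∈ Icc (0:ℝ) T, HasDerivAt (x ε) (F ε t (x ε t)) t)
    (hsoly : ∀ ε ∈ Ioc (0:ℝ) 1, ∀ t ∈ Icc (0:ℝ) T, HasDerivAt (y ε) (F ε t (y ε t)) t) :
    ∀ q : ℕ, ∃ Cq > 0, ∀ ε ∈ Ioc (0:ℝ) 1, ∀ t ∈ Icc (0:ℝ) T,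
      |x ε t - y ε t| ≤ Cq * ε ^ q := by
  intro q
  obtain ⟨cq, hcq, hnn⟩ := hneg (q + ⌈c * T⌉₊)
  refine ⟨cq, hcq, fun ε hε t ht => ?_⟩
  have hgron := abs_sub_le_of_trajectories_of_abs_deriv_le (hF' ε hε) (hF'log ε hε)
    (hsolx ε hε) (hsoly ε hε) t ht
  rw [hinitx ε hε, hinity ε hε, sub_add_cancel_left, abs_neg, sub_zero] at hgron
  calc |x ε t - y ε t| ≤ |nn ε| * exp (c * |log ε| * t) := hgron
    _ ≤ cq * ε ^ (q + ⌈c * T⌉₊) * ε ^ (-(c * T)) :=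
      mul_le_mul (hnn ε hε) (exp_mul_abs_log_mul_le_rpow_neg hc.le hε.1 hε.2 ht.2)
        (exp_pos _).le (mul_nonneg hcq.le (pow_nonneg hε.1.le _))
    _ ≤ cq * ε ^ q := by
      rw [mul_assoc]
      exact mul_le_mul_of_nonneg_left (pow_add_ceil_mul_rpow_neg_le hε.1 hε.2 q _) hcq.le

/-- for a net of `C¹` vector fields with moderate bounds and logarithmically
moderate spatial derivatives, a negligible perturbation of the initial data produces a
negligible perturbation of the net of ODE solutions. -/
theorem negligible_perturbation_of_ode_solutions
    (T : ℝ) (hT : 0 < T) (c : ℝ) (hc : 0 < c) (N : ℕ)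
    (F F' : ℝ → ℝ → ℝ → ℝ)
    (hFc : ∀ ε ∈ Ioc (0:ℝ) 1, Continuous fun p : ℝ × ℝ => F ε p.1 p.2)
    (hFbound : ∀ ε ∈ Ioc (0:ℝ) 1, ∀ t x, |F ε t x| ≤ c * ε ^ (-(N:ℤ)))
    (hF' : ∀ ε ∈ Ioc (0:ℝ) 1, ∀ t x, HasDerivAt (F ε t) (F' ε t x) x)
    (hF'log : ∀ ε ∈ Ioc (0:ℝ) 1, ∀ t x, |F' ε t x| ≤ c * |Real.log ε|)
    (x y : ℝ → ℝ → ℝ) (x₀ nn : ℝ → ℝ)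
    (hinitx : ∀ ε ∈ Ioc (0:ℝ) 1, x ε 0 = x₀ ε)
    (hinity : ∀ ε ∈ Ioc (0:ℝ) 1, y ε 0 = x₀ ε + nn ε)
    (hneg : ∀ q : ℕ, ∃ cq > 0, ∀ ε ∈ Ioc (0:ℝ) 1, |nn ε| ≤ cq * ε ^ q)
    (hsolx : ∀ ε ∈ Ioc (0:ℝ) 1, ∀ t ∈ Icc (0:ℝ) T, HasDerivAt (x ε) (F ε t (x ε t)) t)
    (hsoly : ∀ ε ∈ Ioc (0:ℝ) 1, ∀ t ∈ Icc (0:ℝ) T, HasDerivAt (y ε) (F ε t (y ε t)) t) :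
    ∀ q : ℕ, ∃ Cq > 0, ∀ ε ∈ Ioc (0:ℝ) 1, ∀ t ∈ Icc (0:ℝ) T,
      |x ε t - y ε t| ≤ Cq * ε ^ q :=
  negligible_perturbation_of_ode_solutions_general T c hc F F' hF' hF'log x y x₀ nn hinitx hinity
    hneg hsolx hsoly
end
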